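/- Let v_0, …, v_d be affinely independent points in ℝ^d, let S be their convex hull, and let δ = max_{i, j} ‖v_i − v_j‖. Let f : ℝ^d → ℝ be twice continuously differentiable on an open set containing S, with ‖f″(s)‖ ≤ H for all s ∈ S, where f″(s) denotes the second derivative (Hessian) of f at s and ‖·‖ its operator norm. Let f_l : ℝ^d → ℝ be the unique affine map with f_l(v_i) = f(v_i) for all i ∈ {0, …, d}. Then for every s ∈ S, |f(s) − f_l(s)| ≤ (1/2) · (d / (2(d + 1))) · δ² · H. -/

import Mathlib

/-!
Write `s = ∑ wᵢ vᵢ` in barycentric coordinates. Since `f_l` is affine and `f_l(vᵢ) = f(vᵢ)`, the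
error `f(s) - f_l(s)` is the `w`-average of the first-order Taylor remainders of `f` at `s`,
evaluated at the vertices; each is at most `H/2 · ‖vᵢ - s‖²`. By the parallel axis theorem,
`∑ wᵢ ‖vᵢ - s‖² = ½ ∑ᵢⱼ wᵢ wⱼ ‖vᵢ - vⱼ‖² ≤ ½ δ² (1 - ∑ wᵢ²)`, and Cauchy–Schwarz gives
`∑ wᵢ² ≥ 1/(d+1)`.
-/

open Set Finset

section Taylor

variable {E F : Type*} [NormedAddCommGroup F] [NormedSpace ℝ F]

theorem norm_sub_sub_smul_deriv_le_of_norm_deriv2_le {g g' g'' : ℝ → F} {a b M : ℝ}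
    (hab : a ≤ b) (hg : ∀ t ∈ Icc a b, HasDerivAt g (g' t) t)
    (hg' : ∀ t ∈ Icc a b, HasDerivAt g' (g'' t) t) (hM : ∀ t ∈ Icc a b, ‖g'' t‖ ≤ M) :
    ‖g b - g a - (b - a) • g' a‖ ≤ M / 2 * (b - a) ^ 2 := by
  have hslope : ∀ t ∈ Icc a b, ‖g' t - g' a‖ ≤ M * (t - a) :=
    norm_image_sub_le_of_norm_deriv_le_segment' (fun t ht => (hg' t ht).hasDerivWithinAt)
      fun t ht => hM t (Ico_subset_Icc_self ht)
  have hbound (t : ℝ) : HasDerivAt (fun t => M / 2 * (t - a) ^ 2) (M * (t - a)) t :=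
    (((hasDerivAt_id' t).sub_const a).fun_pow 2).const_mul (M / 2) |>.congr_deriv (by ring)
  have hrem (t : ℝ) (ht : t ∈ Icc a b) :
      HasDerivAt (fun t => g t - g a - (t - a) • g' a) (g' t - g' a) t := by
    simpa using
      ((hg t ht).sub_const (g a)).fun_sub (((hasDerivAt_id' t).sub_const a).smul_const (g' a))
  exact image_norm_le_of_norm_deriv_right_le_deriv_boundary
    (fun t ht => (hrem t ht).continuousAt.continuousWithinAt)
    (fun t ht => (hrem t (Ico_subset_Icc_self ht)).hasDerivWithinAt) (by simp) hbound
    (fun t ht => hslope t (Ico_subset_Icc_self ht)) (right_mem_Icc.2 hab)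

variable [NormedAddCommGroup E] [NormedSpace ℝ E]

theorem norm_sub_sub_fderiv_le_of_norm_iteratedFDeriv_two_le {f : E → F} {x y : E} {H : ℝ}
    (hf : ∀ z ∈ segment ℝ x y, ContDiffAt ℝ 2 f z)
    (hH : ∀ z ∈ segment ℝ x y, ‖iteratedFDeriv ℝ 2 f z‖ ≤ H) :
    ‖f y - f x - fderiv ℝ f x (y - x)‖ ≤ H / 2 * ‖y - x‖ ^ 2 := by
  set L := AffineMap.lineMap (k := ℝ) x y
  have hL (t : ℝ) (ht : t ∈ Icc (0 : ℝ) 1) : L t ∈ segment ℝ x y := by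
    rw [segment_eq_image_lineMap]
    exact mem_image_of_mem _ ht
  have hg (t : ℝ) (ht : t ∈ Icc (0 : ℝ) 1) :
      HasDerivAt (fun t => f (L t)) (fderiv ℝ f (L t) (y - x)) t :=
    ((hf _ (hL t ht)).differentiableAt two_ne_zero).hasFDerivAt.comp_hasDerivAt t
      AffineMap.hasDerivAt_lineMap
  have hg' (t : ℝ) (ht : t ∈ Icc (0 : ℝ) 1) :
      HasDerivAt (fun t => fderiv ℝ f (L t) (y - x))
        (fderiv ℝ (fderiv ℝ f) (L t) (y - x) (y - x)) t := by
    have hf' := (hf _ (hL t ht)).fderiv_right (m := 1) le_rfl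
    exact ((hf'.differentiableAt one_ne_zero).hasFDerivAt.comp_hasDerivAt t
      AffineMap.hasDerivAt_lineMap).clm_apply (hasDerivAt_const t (y - x)) |>.congr_deriv
      (by simp)
  have hM (t : ℝ) (ht : t ∈ Icc (0 : ℝ) 1) :
      ‖fderiv ℝ (fderiv ℝ f) (L t) (y - x) (y - x)‖ ≤ H * ‖y - x‖ ^ 2 := by
    have hnorm : ‖fderiv ℝ (fderiv ℝ f) (L t)‖ = ‖iteratedFDeriv ℝ 2 f (L t)‖ := by
      rw [← norm_iteratedFDeriv_one, norm_iteratedFDeriv_fderiv]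
    calc _ ≤ ‖fderiv ℝ (fderiv ℝ f) (L t)‖ * ‖y - x‖ * ‖y - x‖ :=
          ContinuousLinearMap.le_opNorm₂ _ _ _
      _ ≤ H * ‖y - x‖ * ‖y - x‖ := by gcongr; exact hnorm ▸ hH _ (hL t ht)
      _ = H * ‖y - x‖ ^ 2 := by ring
  convert norm_sub_sub_smul_deriv_le_of_norm_deriv2_le zero_le_one hg hg' hM using 1
  · simp [L]
  · ring

end Taylor

section Interpolation

variable {ι E F : Type*} [Fintype ι] [AddCommGroup E] [Module ℝ E]

theorem exists_sum_smul_eq_of_mem_convexHull_range {v : ι → E} {x : E}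
    (hx : x ∈ convexHull ℝ (range v)) :
    ∃ w : ι → ℝ, (∀ i, 0 ≤ w i) ∧ ∑ i, w i = 1 ∧ ∑ i, w i • v i = x := by
  classical
  rw [convexHull_range_eq_exists_affineCombination] at hx
  obtain ⟨t, w, hw₀, hw₁, rfl⟩ := hx
  have hw₁' : ∑ i, (t : Set ι).indicator w i = 1 := by
    rwa [Finset.sum_indicator_subset _ t.subset_univ]
  refine ⟨(t : Set ι).indicator w, fun i => indicator_nonneg (fun i hi => hw₀ i hi) i, hw₁', ?_⟩
  rw [← Finset.affineCombination_eq_linear_combination _ _ _ hw₁',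
    Finset.affineCombination_indicator_subset _ _ t.subset_univ]

theorem sub_affineMap_eq_sum_smul [AddCommGroup F] [Module ℝ F] {f : E → F} {fl : E →ᵃ[ℝ] F}
    {v : ι → E} (hfl : ∀ i, fl (v i) = f (v i)) (D : E →ₗ[ℝ] F) {w : ι → ℝ}
    (hw : ∑ i, w i = 1) {x : E} (hx : ∑ i, w i • v i = x) :
    f x - fl x = ∑ i, w i • (f x + D (v i - x) - f (v i)) := by
  have hfl_x : fl x = ∑ i, w i • f (v i) := by
    rw [← hx, ← Finset.affineCombination_eq_linear_combination _ _ _ hw,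
      Finset.map_affineCombination _ _ _ hw,
      Finset.affineCombination_eq_linear_combination _ _ _ hw]
    simp [hfl]
  have hD : ∑ i, w i • D (v i - x) = 0 := by
    simp only [← map_smul, ← map_sum, smul_sub, Finset.sum_sub_distrib, hx, ← Finset.sum_smul,
      hw, one_smul, sub_self, map_zero]
  simp only [smul_sub, smul_add, Finset.sum_sub_distrib, Finset.sum_add_distrib, hD,
    ← Finset.sum_smul, hw, one_smul, hfl_x, add_zero]

theorem norm_sub_affineMap_le_sum_mul_norm [NormedAddCommGroup F] [NormedSpace ℝ F]
    {f : E → F} {fl : E →ᵃ[ℝ] F} {v : ι → E} (hfl : ∀ i, fl (v i) = f (v i)) (D : E →ₗ[ℝ] F)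
    {w : ι → ℝ} (hw₀ : ∀ i, 0 ≤ w i) (hw : ∑ i, w i = 1) {x : E} (hx : ∑ i, w i • v i = x) :
    ‖f x - fl x‖ ≤ ∑ i, w i * ‖f (v i) - f x - D (v i - x)‖ := by
  rw [sub_affineMap_eq_sum_smul hfl D hw hx]
  refine (norm_sum_le _ _).trans (Finset.sum_le_sum fun i _ => ?_)
  rw [norm_smul, Real.norm_of_nonneg (hw₀ i), ← norm_neg, neg_sub, sub_sub]

end Interpolation

section Variance

variable {ι E : Type*} [Fintype ι] {v : ι → E} {w : ι → ℝ}

theorem sum_sum_mul_norm_sub_sq_le [SeminormedAddCommGroup E] (hw₀ : ∀ i, 0 ≤ w i)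
    (hw : ∑ i, w i = 1) {δ : ℝ} (hδ : ∀ i j, ‖v i - v j‖ ≤ δ) :
    ∑ i, ∑ j, w i * w j * ‖v i - v j‖ ^ 2 ≤ δ ^ 2 * (1 - ∑ i, w i ^ 2) := by
  classical
  have hrow (i : ι) : ∑ j, w j * ‖v i - v j‖ ^ 2 ≤ (1 - w i) * δ ^ 2 :=
    calc ∑ j, w j * ‖v i - v j‖ ^ 2 = ∑ j ∈ univ.erase i, w j * ‖v i - v j‖ ^ 2 :=
          (Finset.sum_erase _ (by simp)).symm
      _ ≤ ∑ j ∈ univ.erase i, w j * δ ^ 2 := by gcongr with j; exacts [hw₀ j, hδ i j]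
      _ = (1 - w i) * δ ^ 2 := by
          rw [← Finset.sum_mul, Finset.sum_erase_eq_sub (mem_univ i), hw]
  calc ∑ i, ∑ j, w i * w j * ‖v i - v j‖ ^ 2 = ∑ i, w i * ∑ j, w j * ‖v i - v j‖ ^ 2 := by
        simp only [mul_assoc, Finset.mul_sum]
    _ ≤ ∑ i, w i * ((1 - w i) * δ ^ 2) := by gcongr with i; exacts [hw₀ i, hrow i]
    _ = δ ^ 2 * (1 - ∑ i, w i ^ 2) := by
        simp only [← mul_assoc, ← Finset.sum_mul, mul_sub, mul_one, Finset.sum_sub_distrib, hw,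
          sq]
        ring

variable [NormedAddCommGroup E] [InnerProductSpace ℝ E] {x : E}

theorem sum_mul_norm_sub_sq_eq (hw : ∑ i, w i = 1) (hx : ∑ i, w i • v i = x) (y : E) :
    ∑ i, w i * ‖y - v i‖ ^ 2 = ‖y - x‖ ^ 2 + ∑ i, w i * ‖v i - x‖ ^ 2 := by
  have hcenter : ∑ i, w i * inner ℝ (y - x) (v i - x) = 0 := by
    simp only [← real_inner_smul_right, ← inner_sum, smul_sub, Finset.sum_sub_distrib, hx,
      ← Finset.sum_smul, hw, one_smul, sub_self, inner_zero_right]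
  have hsplit (i : ι) :
      ‖y - v i‖ ^ 2 = ‖y - x‖ ^ 2 - 2 * inner ℝ (y - x) (v i - x) + ‖v i - x‖ ^ 2 := by
    rw [← norm_sub_sq_real, sub_sub_sub_cancel_right]
  simp only [hsplit, mul_add, mul_sub, Finset.sum_add_distrib, Finset.sum_sub_distrib,
    ← Finset.sum_mul, hw, one_mul, mul_left_comm _ (2 : ℝ), ← Finset.mul_sum, hcenter, mul_zero,
    sub_zero]

theorem two_mul_sum_mul_norm_sub_sq_eq (hw : ∑ i, w i = 1) (hx : ∑ i, w i • v i = x) :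
    2 * ∑ i, w i * ‖v i - x‖ ^ 2 = ∑ i, ∑ j, w i * w j * ‖v i - v j‖ ^ 2 := by
  simp only [mul_assoc, ← Finset.mul_sum, sum_mul_norm_sub_sq_eq hw hx, mul_add,
    Finset.sum_add_distrib, ← Finset.sum_mul, hw, one_mul]
  ring

theorem sum_mul_norm_sub_sq_le (hw₀ : ∀ i, 0 ≤ w i) (hw : ∑ i, w i = 1)
    (hx : ∑ i, w i • v i = x) {δ : ℝ} (hδ : ∀ i j, ‖v i - v j‖ ≤ δ) :
    ∑ i, w i * ‖v i - x‖ ^ 2 ≤ (Fintype.card ι - 1) / (2 * Fintype.card ι) * δ ^ 2 := by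
  have hcs : 1 ≤ Fintype.card ι * ∑ i, w i ^ 2 := by
    simpa [hw] using sq_sum_le_card_mul_sum_sq (s := Finset.univ) (f := w)
  have hcard : (0 : ℝ) < Fintype.card ι := by
    by_contra! h
    nlinarith [Finset.sum_nonneg fun i (_ : i ∈ Finset.univ) => sq_nonneg (w i)]
  have hvar := two_mul_sum_mul_norm_sub_sq_eq hw hx ▸ sum_sum_mul_norm_sub_sq_le hw₀ hw hδ
  rw [div_mul_eq_mul_div, le_div_iff₀ (by positivity)]
  nlinarith [sq_nonneg δ]

end Variance

theorem interpolation_error_C2_general (d : ℕ)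
    (v : Fin (d + 1) → EuclideanSpace ℝ (Fin d))
    (S : Set (EuclideanSpace ℝ (Fin d)))
    (hS : S = convexHull ℝ (Set.range v))
    (δ : ℝ)
    (hδ : IsGreatest {r : ℝ | ∃ i j, r = ‖v i - v j‖} δ)
    (f : EuclideanSpace ℝ (Fin d) → ℝ)
    (U : Set (EuclideanSpace ℝ (Fin d))) (hU : IsOpen U) (hSU : S ⊆ U)
    (hf : ContDiffOn ℝ 2 f U)
    (H : ℝ)
    (hH : ∀ s ∈ S, ‖iteratedFDeriv ℝ 2 f s‖ ≤ H)
    (fl : EuclideanSpace ℝ (Fin d) →ᵃ[ℝ] ℝ)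
    (hfl : ∀ i, fl (v i) = f (v i)) :
    ∀ s ∈ S, |f s - fl s| ≤ (1 / 2) * ((d : ℝ) / (2 * (d + 1))) * δ ^ 2 * H := by
  intro s hs
  obtain ⟨w, hw₀, hw, hws⟩ := exists_sum_smul_eq_of_mem_convexHull_range (hS ▸ hs)
  have hH₀ : 0 ≤ H := (norm_nonneg _).trans (hH s hs)
  have htaylor (i : Fin (d + 1)) :
      ‖f (v i) - f s - fderiv ℝ f s (v i - s)‖ ≤ H / 2 * ‖v i - s‖ ^ 2 := by
    have hseg : segment ℝ s (v i) ⊆ S := (hS ▸ convex_convexHull ℝ _).segment_subset hs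
      (hS ▸ subset_convexHull ℝ _ (mem_range_self i))
    exact norm_sub_sub_fderiv_le_of_norm_iteratedFDeriv_two_le
      (fun z hz => hf.contDiffAt (hU.mem_nhds (hSU (hseg hz)))) (fun z hz => hH z (hseg hz))
  have hvar := sum_mul_norm_sub_sq_le hw₀ hw hws fun i j => hδ.2 ⟨i, j, rfl⟩
  rw [Fintype.card_fin, Nat.cast_add_one, add_sub_cancel_right] at hvar
  calc |f s - fl s| = ‖f s - fl s‖ := (Real.norm_eq_abs _).symm
    _ ≤ ∑ i, w i * ‖f (v i) - f s - fderiv ℝ f s (v i - s)‖ :=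
        norm_sub_affineMap_le_sum_mul_norm hfl (fderiv ℝ f s : _ →ₗ[ℝ] ℝ) hw₀ hw hws
    _ ≤ ∑ i, w i * (H / 2 * ‖v i - s‖ ^ 2) := by gcongr with i; exacts [hw₀ i, htaylor i]
    _ = H / 2 * ∑ i, w i * ‖v i - s‖ ^ 2 := by
        rw [Finset.mul_sum]
        exact Finset.sum_congr rfl fun i _ => by ring
    _ ≤ H / 2 * (d / (2 * (d + 1)) * δ ^ 2) := by gcongr
    _ = (1 / 2) * ((d : ℝ) / (2 * (d + 1))) * δ ^ 2 * H := by ring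

/-- Case (iv) of the paper's Lemma 1 (Stämpfle 2000): the linear interpolation
error of a `C²` function on a `d`-simplex of diameter `δ` is bounded by
`(1/2) · (d / (2(d + 1))) · δ² · H`, where `H` bounds the operator norm of the
second derivative on the simplex. -/
theorem interpolation_error_C2 (d : ℕ)
    (v : Fin (d + 1) → EuclideanSpace ℝ (Fin d))
    (hv : AffineIndependent ℝ v)
    (S : Set (EuclideanSpace ℝ (Fin d)))
    (hS : S = convexHull ℝ (Set.range v))
    (δ : ℝ)
    (hδ : IsGreatest {r : ℝ | ∃ i j, r = ‖v i - v j‖} δ)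
    (f : EuclideanSpace ℝ (Fin d) → ℝ)
    (U : Set (EuclideanSpace ℝ (Fin d))) (hU : IsOpen U) (hSU : S ⊆ U)
    (hf : ContDiffOn ℝ 2 f U)
    (H : ℝ)
    (hH : ∀ s ∈ S, ‖iteratedFDeriv ℝ 2 f s‖ ≤ H)
    (fl : EuclideanSpace ℝ (Fin d) →ᵃ[ℝ] ℝ)
    (hfl : ∀ i, fl (v i) = f (v i)) :
    ∀ s ∈ S, |f s - fl s| ≤ (1 / 2) * ((d : ℝ) / (2 * (d + 1))) * δ ^ 2 * H :=
  interpolation_error_C2_general d v S hS δ hδ f U hU hSU hf H hH fl hfl
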